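/- An IL_set-frame F validates the principle M0 (A▷B → (◇A ∧ □C) ▷ (B ∧ □C)) if and only if F is an IL_set(M0)-frame, i.e., for all w,x,y,Y with wRx, xRy, and yS_wY, there exists Y' ⊆ Y such that xS_wY' and every y'∈Y' satisfies: for all z, y'Rz implies xRz. -/
import Mathlib


/-- Modal formulas of interpretability logic: atoms, ⊥, →, □, ▷. -/
inductive Fm : Type
  | atom : ℕ → Fm
  | bot : Fm
  | imp : Fm → Fm → Fm
  | box : Fm → Fm
  | rhd : Fm → Fm → Fm
deriving DecidableEq

namespace Fm
def neg (A : Fm) : Fm := .imp A .bot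
def conj (A B : Fm) : Fm := neg (.imp A (neg B))
def disj (A B : Fm) : Fm := .imp (neg A) B
def dia (A : Fm) : Fm := neg (.box (neg A))
end Fm

/-- `f` is a boolean propositional evaluation (treats □ and ▷ formulas as atoms). -/
def PropEval (f : Fm → Bool) : Prop :=
  f Fm.bot = false ∧ ∀ A B, f (Fm.imp A B) = (!(f A) || f B)

/-- Propositional tautology. -/
def Taut (A : Fm) : Prop := ∀ f, PropEval f → f A = true

/-- Derivability in the interpretability logic IL extended with extra axioms `X`. -/
inductive Prov (X : Fm → Prop) : Fm → Prop
  | taut {A} : Taut A → Prov X A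
  | extra {A} : X A → Prov X A
  | l1 (A B) : Prov X (.imp (.box (.imp A B)) (.imp (.box A) (.box B)))
  | l2 (A) : Prov X (.imp (.box A) (.box (.box A)))
  | l3 (A) : Prov X (.imp (.box (.imp (.box A) A)) (.box A))
  | j1 (A B) : Prov X (.imp (.box (.imp A B)) (.rhd A B))
  | j2 (A B C) : Prov X (.imp (Fm.conj (.rhd A B) (.rhd B C)) (.rhd A C))
  | j3 (A B C) : Prov X (.imp (Fm.conj (.rhd A C) (.rhd B C)) (.rhd (Fm.disj A B) C))
  | j4 (A B) : Prov X (.imp (.rhd A B) (.imp (Fm.dia A) (Fm.dia B)))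
  | j5 (A) : Prov X (.rhd (Fm.dia A) A)
  | mp {A B} : Prov X (.imp A B) → Prov X A → Prov X B
  | nec {A} : Prov X A → Prov X (.box A)

/-- Derivability in plain IL. -/
def ILProv : Fm → Prop := Prov (fun _ => False)

/-- A Veltman frame (IL-frame). -/
structure VFrame where
  W : Type
  ne : Nonempty W
  R : W → W → Prop
  /-- `S x y z` means `y S_x z`. -/
  S : W → W → W → Prop
  R_trans : ∀ {x y z}, R x y → R y z → R x z
  R_cwf : WellFounded (fun x y => R y x)
  S_R : ∀ {x y z}, S x y z → R x y ∧ R x z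
  S_refl : ∀ {x y}, R x y → S x y y
  R_S : ∀ {x y z}, R x y → R y z → S x y z
  S_trans : ∀ {x u v w}, S x u v → S x v w → S x u w

structure VModel extends VFrame where
  val : W → ℕ → Prop

/-- Satisfaction on Veltman models. -/
def VSat (M : VModel) : M.W → Fm → Prop
  | w, .atom n => M.val w n
  | _, .bot => False
  | w, .imp A B => VSat M w A → VSat M w B
  | w, .box A => ∀ v, M.R w v → VSat M v A
  | w, .rhd A B => ∀ u, M.R w u → VSat M u A → ∃ v, M.S w u v ∧ VSat M v B

/-- Validity on a Veltman frame. -/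
def VFrame.Valid (F : VFrame) (A : Fm) : Prop :=
  ∀ val : F.W → ℕ → Prop, ∀ w : F.W, VSat { toVFrame := F, val := val } w A

/-- A generalized Veltman frame (ILset-frame). -/
structure GFrame where
  W : Type
  ne : Nonempty W
  R : W → W → Prop
  /-- `S w x Y` means `x S_w Y`. -/
  S : W → W → Set W → Prop
  R_trans : ∀ {x y z}, R x y → R y z → R x z
  R_cwf : WellFounded (fun x y => R y x)
  S_ne : ∀ {w x Y}, S w x Y → Y.Nonempty
  S_R : ∀ {w x Y}, S w x Y → R w x ∧ ∀ y ∈ Y, R w y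
  S_refl : ∀ {w x}, R w x → S w x {x}
  S_qtrans : ∀ {w x Y}, S w x Y → ∀ y ∈ Y, ∀ Z, y ∉ Z → S w y Z → S w x Z
  R_S : ∀ {w x y}, R w x → R x y → S w x {y}

structure GModel extends GFrame where
  val : W → ℕ → Prop

/-- Satisfaction on generalized Veltman models. -/
def GSat (M : GModel) : M.W → Fm → Prop
  | w, .atom n => M.val w n
  | _, .bot => False
  | w, .imp A B => GSat M w A → GSat M w B
  | w, .box A => ∀ v, M.R w v → GSat M v A
  | w, .rhd A B => ∀ x, M.R w x → GSat M x A →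
      ∃ Y, M.S w x Y ∧ ∀ y ∈ Y, GSat M y B

/-- Validity on a generalized Veltman frame. -/
def GFrame.Valid (F : GFrame) (A : Fm) : Prop :=
  ∀ val : F.W → ℕ → Prop, ∀ w : F.W, GSat { toGFrame := F, val := val } w A

/-- Instances of the principle M0. -/
def m0fm (A B C : Fm) : Fm :=
  .imp (.rhd A B) (.rhd (Fm.conj (Fm.dia A) (.box C)) (Fm.conj B (.box C)))

/-- Instances of the principle P0. -/
def p0fm (A B : Fm) : Fm := .imp (.rhd A (Fm.dia B)) (.box (.rhd A B))

/-- Instances of the principle R. -/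
def rfm (A B C : Fm) : Fm :=
  .imp (.rhd A B) (.rhd (Fm.neg (.rhd A (Fm.neg C))) (Fm.conj B (.box C)))

/-- Instances of the principle W. -/
def wfm (A B : Fm) : Fm :=
  .imp (.rhd A B) (.rhd A (Fm.conj B (.box (Fm.neg A))))

/-- Instances of the principle W*. -/
def wstarfm (A B C : Fm) : Fm :=
  .imp (.rhd A B)
    (.rhd (Fm.conj B (.box C)) (Fm.conj (Fm.conj B (.box C)) (.box (Fm.neg A))))

/-- Instances of the principle R*. -/
def rstarfm (A B C : Fm) : Fm :=
  .imp (.rhd A B)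
    (.rhd (Fm.neg (.rhd A (Fm.neg C))) (Fm.conj (Fm.conj B (.box C)) (.box (Fm.neg A))))

/-- The frame condition for M0 on generalized Veltman frames. -/
def GFrame.M0Cond (F : GFrame) : Prop :=
  ∀ w x y Y, F.R w x → F.R x y → F.S w y Y →
    ∃ Y', Y' ⊆ Y ∧ F.S w x Y' ∧ ∀ y' ∈ Y', ∀ z, F.R y' z → F.R x z

/-- The frame condition for P0 on generalized Veltman frames. -/
def GFrame.P0Cond (F : GFrame) : Prop :=
  ∀ w x y Y Z, F.R w x → F.R x y → F.S w y Y →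
    (∀ y' ∈ Y, ∃ z ∈ Z, F.R y' z) → ∃ Z', Z' ⊆ Z ∧ F.S x y Z'

/-- `Γ` is a choice set for `(w,x)`. -/
def GFrame.ChoiceSet (F : GFrame) (w x : F.W) (Γ : Set F.W) : Prop :=
  ∀ X, F.S w x X → (X ∩ Γ).Nonempty

/-- The frame condition for R on generalized Veltman frames. -/
def GFrame.RCond (F : GFrame) : Prop :=
  ∀ w x y Y, F.R w x → F.R x y → F.S w y Y →
    ∀ Γ, F.ChoiceSet x y Γ →
      ∃ Y', Y' ⊆ Y ∧ F.S w x Y' ∧ ∀ y' ∈ Y', ∀ z, F.R y' z → z ∈ Γ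

/-- frame correspondence for M0 on generalized Veltman frames. -/
theorem m0_frame_correspondence (F : GFrame) :
    (∀ A B C, F.Valid (m0fm A B C)) ↔ F.M0Cond := by
  classical
  constructor
  · intro hval w x y Y hwx hxy hSwY
    set val : F.W → ℕ → Prop := fun u n =>
      (n = 0 ∧ u = y) ∨ (n = 1 ∧ u ∈ Y) ∨ (n = 2 ∧ F.R x u) with hv
    have h := hval (.atom 0) (.atom 1) (.atom 2) val w
    have hprem : GSat { toGFrame := F, val := val } w (.rhd (.atom 0) (.atom 1)) := by
      intro u hwu hA
      have hu : u = y := by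
        rcases hA with ⟨_, h⟩ | ⟨h, _⟩ | ⟨h, _⟩
        · exact h
        · exact absurd h (by decide)
        · exact absurd h (by decide)
      rw [hu]
      exact ⟨Y, hSwY, fun z hz => Or.inr (Or.inl ⟨rfl, hz⟩)⟩
    have hconc := h hprem x hwx
    have hx : GSat { toGFrame := F, val := val } x (Fm.conj (Fm.dia (.atom 0)) (.box (.atom 2))) := by
      intro f
      apply f
      · intro g
        exact g y hxy (Or.inl ⟨rfl, rfl⟩)
      · intro v hv
        exact Or.inr (Or.inr ⟨rfl, hv⟩)
    obtain ⟨Y', hSY', hY'⟩ := hconc hx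
    refine ⟨Y', ?_, hSY', ?_⟩
    · intro y' hy'
      have hc := hY' y' hy'
      by_contra hny
      apply hc
      intro hB _
      rcases hB with ⟨h0, _⟩ | ⟨_, h1⟩ | ⟨h0, _⟩
      · exact absurd h0 (by decide)
      · exact hny h1
      · exact absurd h0 (by decide)
    · intro y' hy' z hz
      have hc := hY' y' hy'
      by_contra hnz
      apply hc
      intro _ hbox
      rcases hbox z hz with ⟨h0, _⟩ | ⟨h0, _⟩ | ⟨_, h2⟩
      · exact absurd h0 (by decide)
      · exact absurd h0 (by decide)
      · exact hnz h2
  · intro hcond A B C val w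
    intro hAB x hwx hx
    have hdia : GSat { toGFrame := F, val := val } x (Fm.dia A) ∧ GSat { toGFrame := F, val := val } x (.box C) := by
      by_contra hcontra
      apply hx
      intro hd hb
      exact hcontra ⟨hd, hb⟩
    obtain ⟨hdiaA, hboxC⟩ := hdia
    have hyex : ∃ v, F.R x v ∧ GSat { toGFrame := F, val := val } v A := by
      by_contra hno
      exact hdiaA (fun v hv ha => hno ⟨v, hv, ha⟩)
    obtain ⟨y, hxy, hyA⟩ := hyex
    obtain ⟨Y, hSwY, hYB⟩ := hAB y (F.R_trans hwx hxy) hyA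
    obtain ⟨Y', hsub, hSY', hprop⟩ := hcond w x y Y hwx hxy hSwY
    refine ⟨Y', hSY', fun y' hy' => ?_⟩
    intro f
    exact f (hYB y' (hsub hy')) (fun z hz => hboxC z (hprop y' hy' z hz))
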